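/- Fix a real number p with 0 < p < ∞ and let ψ(t) = (1 + (t + √(t²+4t))/2)^{p/2} + (1 + (t − √(t²+4t))/2)^{p/2} for t ≥ 0, and λ_n = (2/(2n)!) ∏_{k=0}^{n−1} (p²/4 − k²). Then for every t ≥ 0 and every integer N ≥ 0: ψ(t) − Σ_{n=0}^N λ_n tⁿ ≥ 0 if p ≥ 2N or ⌊N − p/2⌋ is odd, and ψ(t) − Σ_{n=0}^N λ_n tⁿ ≤ 0 otherwise. -/

import Mathlib

/-!
Substituting `t = (2 sinh u)²` turns `ψ(t)` into `2 cosh (p u)`, so the remainder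
`f(u) = ψ(t) - Σ_{n ≤ N} λ_n tⁿ` satisfies `f'' = p² f + h`, `f(0) = f'(0) = 0`, where by the
recurrence `(2n+1)(2n+2) λ_{n+1} = (p²/4 - n²) λ_n` all but one term cancel in
`h = 4 (2N+1)(2N+2) λ_{N+1} (2 sinh u)^{2N}`. As `e^{-pu}(f' + p f)` and `e^{pu}(f' - p f)` have
derivatives `e^{∓pu} h`, the sign of `λ_{N+1}` passes to `f'` and then to `f`. That sign is the
sign of `∏_{k ≤ N} (p/2 - k)`, whose `⌊N - p/2⌋ + 1` factors with `k ≥ p/2` are `≤ 0`.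
-/

/-- The function `ψ(t) = (1 + (t + √(t²+4t))/2)^{p/2} + (1 + (t − √(t²+4t))/2)^{p/2}`. -/
noncomputable def psiFun (p : ℝ) (t : ℝ) : ℝ :=
  (1 + (t + Real.sqrt (t ^ 2 + 4 * t)) / 2) ^ (p / 2) +
    (1 + (t - Real.sqrt (t ^ 2 + 4 * t)) / 2) ^ (p / 2)

/-- The coefficients `λ_n = (2/(2n)!) ∏_{k=0}^{n−1} (p²/4 − k²)`. -/
noncomputable def psiCoeff (p : ℝ) (n : ℕ) : ℝ :=
  (2 / Nat.factorial (2 * n)) * ∏ k ∈ Finset.range n, (p ^ 2 / 4 - (k : ℝ) ^ 2)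

open Real Finset

theorem le_of_hasDerivAt_nonneg {F F' : ℝ → ℝ} {u : ℝ} (hF : ∀ v, HasDerivAt F (F' v) v)
    (hF' : ∀ v, 0 ≤ v → 0 ≤ F' v) (hu : 0 ≤ u) : F 0 ≤ F u :=
  monotoneOn_of_hasDerivWithinAt_nonneg (convex_Ici 0)
    (fun v _ => (hF v).continuousAt.continuousWithinAt) (fun v _ => (hF v).hasDerivWithinAt)
    (fun v hv => hF' v (interior_subset hv)) Set.self_mem_Ici hu hu

theorem nonneg_of_hasDerivAt_sq_mul_add {f f' h : ℝ → ℝ} {q u : ℝ}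
    (hf : ∀ v, HasDerivAt f (f' v) v) (hf' : ∀ v, HasDerivAt f' (q ^ 2 * f v + h v) v)
    (hh : ∀ v, 0 ≤ v → 0 ≤ h v) (hf0 : f 0 = 0) (hf'0 : f' 0 = 0) (hu : 0 ≤ u) :
    0 ≤ f u := by
  have hplus : ∀ v, 0 ≤ v → 0 ≤ f' v + q * f v := fun v hv => by
    have hmono := le_of_hasDerivAt_nonneg (F := fun v => exp (-(q * v)) * (f' v + q * f v))
      (fun v => by
        refine (((hasDerivAt_id' v).const_mul q).fun_neg.exp.fun_mul
          ((hf' v).fun_add ((hf v).const_mul q))).congr_deriv ?_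
        ring)
      (fun v hv => mul_nonneg (exp_pos _).le (hh v hv)) hv
    simp only [hf0, hf'0, mul_zero, add_zero] at hmono
    exact nonneg_of_mul_nonneg_right hmono (exp_pos _)
  have hminus : ∀ v, 0 ≤ v → 0 ≤ f' v - q * f v := fun v hv => by
    have hmono := le_of_hasDerivAt_nonneg (F := fun v => exp (q * v) * (f' v - q * f v))
      (fun v => by
        refine (((hasDerivAt_id' v).const_mul q).exp.fun_mul
          ((hf' v).fun_sub ((hf v).const_mul q))).congr_deriv ?_
        ring)
      (fun v hv => mul_nonneg (exp_pos _).le (hh v hv)) hv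
    simp only [hf0, hf'0, mul_zero, sub_zero] at hmono
    exact nonneg_of_mul_nonneg_right hmono (exp_pos _)
  simpa [hf0] using le_of_hasDerivAt_nonneg hf (fun v hv => by
    linarith [hplus v hv, hminus v hv]) hu

theorem floor_natCast_sub_of_nonneg {a : ℝ} (ha : 0 ≤ a) (N : ℕ) :
    ⌊(N : ℝ) - a⌋ = N - ⌈a⌉₊ := by
  rw [sub_eq_add_neg, Int.floor_natCast_add, Int.floor_neg, Int.natCast_ceil_eq_ceil ha]; ring

theorem neg_one_pow_mul_prod_sq_sub_sq_nonneg {a : ℝ} (ha : 0 ≤ a) (n : ℕ) :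
    0 ≤ (-1) ^ (n - ⌈a⌉₊) * ∏ k ∈ range n, (a ^ 2 - (k : ℝ) ^ 2) := by
  induction n with
  | zero => simp
  | succ n ih =>
    rw [prod_range_succ]
    rcases le_or_gt a n with han | han
    · have hc : ⌈a⌉₊ ≤ n := Nat.ceil_le.2 han
      rw [show n + 1 - ⌈a⌉₊ = n - ⌈a⌉₊ + 1 by omega, pow_succ]
      have : a ^ 2 ≤ (n : ℝ) ^ 2 := pow_le_pow_left₀ ha han 2
      nlinarith
    · have hc : n + 1 ≤ ⌈a⌉₊ := Nat.add_one_le_ceil_iff.2 han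
      rw [show n + 1 - ⌈a⌉₊ = n - ⌈a⌉₊ by omega]
      have : (n : ℝ) ^ 2 < a ^ 2 := pow_lt_pow_left₀ han (Nat.cast_nonneg n) two_ne_zero
      nlinarith

theorem psiCoeff_zero (p : ℝ) : psiCoeff p 0 = 2 := by
  simp [psiCoeff]

theorem psiCoeff_succ (p : ℝ) (n : ℕ) :
    (2 * n + 1) * (2 * n + 2) * psiCoeff p (n + 1) =
      (p ^ 2 / 4 - (n : ℝ) ^ 2) * psiCoeff p n := by
  have hfac : ((2 * (n + 1)).factorial : ℝ) = (2 * n + 1) * (2 * n + 2) * (2 * n).factorial := by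
    rw [show 2 * (n + 1) = 2 * n + 1 + 1 by ring, Nat.factorial_succ, Nat.factorial_succ]
    push_cast; ring
  have hne : ((2 * n).factorial : ℝ) ≠ 0 := by positivity
  rw [psiCoeff, psiCoeff, prod_range_succ, hfac]
  field_simp

theorem psiCoeff_succ_eq (p : ℝ) (N : ℕ) :
    psiCoeff p (N + 1) =
      2 / (2 * (N + 1)).factorial * ∏ k ∈ range (N + 1), ((p / 2) ^ 2 - (k : ℝ) ^ 2) := by
  simp only [psiCoeff, div_pow]; norm_num

theorem psiCoeff_succ_nonneg {p : ℝ} (hp : 0 ≤ p) {N : ℕ}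
    (h : 2 * (N : ℝ) ≤ p ∨ Odd ⌊(N : ℝ) - p / 2⌋) : 0 ≤ psiCoeff p (N + 1) := by
  rw [psiCoeff_succ_eq]
  refine mul_nonneg (by positivity) ?_
  rcases h with h | h
  · refine prod_nonneg fun k hk => sub_nonneg.2 (pow_le_pow_left₀ k.cast_nonneg ?_ 2)
    have : (k : ℝ) ≤ N := by exact_mod_cast Nat.lt_succ_iff.1 (mem_range.1 hk)
    linarith
  · have hsign := neg_one_pow_mul_prod_sq_sub_sq_nonneg (a := p / 2) (by positivity) (N + 1)
    rw [floor_natCast_sub_of_nonneg (by positivity)] at h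
    rcases le_or_gt ⌈p / 2⌉₊ (N + 1) with hc | hc
    · have : Even (N + 1 - ⌈p / 2⌉₊) := by
        rw [← Int.even_coe_nat]; push_cast [hc]
        rw [add_sub_right_comm]; exact h.add_one
      rwa [this.neg_one_pow, one_mul] at hsign
    · rwa [Nat.sub_eq_zero_of_le hc.le, pow_zero, one_mul] at hsign

theorem psiCoeff_succ_nonpos {p : ℝ} (hp : 0 ≤ p) {N : ℕ}
    (h : ¬(2 * (N : ℝ) ≤ p ∨ Odd ⌊(N : ℝ) - p / 2⌋)) : psiCoeff p (N + 1) ≤ 0 := by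
  push Not at h
  obtain ⟨hlt, heven⟩ := h
  rw [Int.not_odd_iff_even, floor_natCast_sub_of_nonneg (by positivity)] at heven
  have hc : ⌈p / 2⌉₊ ≤ N := Nat.ceil_le.2 (by linarith)
  have hodd : Odd (N + 1 - ⌈p / 2⌉₊) := by
    rw [← Int.odd_coe_nat]; push_cast [hc.trans N.le_succ]
    rw [add_sub_right_comm]; exact heven.add_one
  have hsign := neg_one_pow_mul_prod_sq_sub_sq_nonneg (a := p / 2) (by positivity) (N + 1)
  rw [hodd.neg_one_pow, neg_one_mul, neg_nonneg] at hsign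
  rw [psiCoeff_succ_eq]
  exact mul_nonpos_of_nonneg_of_nonpos (by positivity) hsign

/-- With `A(x) = Σ_{n ≤ N} λ_n x^{2n}` the left side is `(x² + 4) A'' + x A'`: the partial sum
solves the equation `(x² + 4) y'' + x y' = p² y` of `2 cosh (p arsinh (x / 2))` up to one term. -/
theorem sum_psiCoeff_ode_defect (p x : ℝ) (N : ℕ) :
    ∑ n ∈ range N, (2 * n + 2) * psiCoeff p (n + 1) *
        ((2 * n + 1) * (x ^ 2 + 4) * x ^ (2 * n) + x ^ (2 * n + 2)) =
      p ^ 2 * ∑ n ∈ range (N + 1), psiCoeff p n * (x ^ 2) ^ n -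
        4 * (2 * N + 1) * (2 * N + 2) * psiCoeff p (N + 1) * (x ^ 2) ^ N := by
  induction N with
  | zero =>
    have h1 := psiCoeff_succ p 0
    norm_num [psiCoeff_zero] at h1 ⊢
    linear_combination 4 * h1
  | succ N ih =>
    rw [sum_range_succ, ih, sum_range_succ _ (N + 1)]
    have hrec := psiCoeff_succ p (N + 1)
    push_cast at hrec ⊢
    linear_combination 4 * (x ^ 2) ^ (N + 1) * hrec

theorem psiFun_two_sinh_sq (p : ℝ) {u : ℝ} (hu : 0 ≤ u) :
    psiFun p ((2 * sinh u) ^ 2) = 2 * cosh (p * u) := by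
  have hsinh : 0 ≤ sinh u := sinh_nonneg_iff.2 hu
  have hsqrt : √(((2 * sinh u) ^ 2) ^ 2 + 4 * (2 * sinh u) ^ 2) = 4 * sinh u * cosh u := by
    rw [← sqrt_sq (by positivity : 0 ≤ 4 * sinh u * cosh u)]
    congr 1
    linear_combination (-16 * sinh u ^ 2) * cosh_sq u
  have hplus : 1 + ((2 * sinh u) ^ 2 + 4 * sinh u * cosh u) / 2 = exp (2 * u) := by
    rw [show 2 * u = u + u by ring, exp_add, ← cosh_add_sinh]
    linear_combination (-1) * cosh_sq u
  have hminus : 1 + ((2 * sinh u) ^ 2 - 4 * sinh u * cosh u) / 2 = exp (2 * -u) := by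
    rw [show 2 * -u = -u + -u by ring, exp_add, ← cosh_sub_sinh]
    linear_combination (-1) * cosh_sq u
  rw [psiFun, hsqrt, hplus, hminus, ← exp_mul, ← exp_mul, cosh_eq]
  ring_nf

/-- The remainder `ψ(t) - Σ_{n ≤ N} λ_n tⁿ` at `t = (2 sinh u)²`, see `psiFun_two_sinh_sq`. -/
noncomputable def psiRemainderHyp (p : ℝ) (N : ℕ) (u : ℝ) : ℝ :=
  2 * cosh (p * u) - ∑ n ∈ range (N + 1), psiCoeff p n * ((2 * sinh u) ^ 2) ^ n

noncomputable def psiRemainderHypDeriv (p : ℝ) (N : ℕ) (u : ℝ) : ℝ :=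
  2 * p * sinh (p * u) -
    ∑ n ∈ range N, (2 * n + 2) * psiCoeff p (n + 1) * (2 * sinh u) ^ (2 * n + 1) * (2 * cosh u)

theorem hasDerivAt_psiRemainderHyp (p : ℝ) (N : ℕ) (u : ℝ) :
    HasDerivAt (psiRemainderHyp p N) (psiRemainderHypDeriv p N u) u := by
  have hS := (hasDerivAt_sinh u).const_mul 2
  have := (((hasDerivAt_id' u).const_mul p).cosh.const_mul 2).sub
    (HasDerivAt.fun_sum fun n (_ : n ∈ range (N + 1)) =>
      ((hS.pow 2).pow n).const_mul (psiCoeff p n))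
  refine this.congr_deriv ?_
  rw [psiRemainderHypDeriv, sum_range_succ']
  simp only [CharP.cast_eq_zero, zero_mul, mul_zero, add_zero, Nat.cast_add, Nat.cast_one,
    Nat.add_sub_cancel, Pi.pow_apply]
  congr 1
  · ring
  · exact sum_congr rfl fun n _ => by rw [← pow_mul]; ring

theorem hasDerivAt_psiRemainderHypDeriv (p : ℝ) (N : ℕ) (u : ℝ) :
    HasDerivAt (psiRemainderHypDeriv p N) (p ^ 2 * psiRemainderHyp p N u +
      4 * (2 * N + 1) * (2 * N + 2) * psiCoeff p (N + 1) * ((2 * sinh u) ^ 2) ^ N) u := by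
  have hS := (hasDerivAt_sinh u).const_mul 2
  have hC := (hasDerivAt_cosh u).const_mul 2
  have := (((hasDerivAt_id' u).const_mul p).sinh.const_mul (2 * p)).sub
    (HasDerivAt.fun_sum fun n (_ : n ∈ range N) =>
      ((hS.pow (2 * n + 1)).const_mul ((2 * n + 2) * psiCoeff p (n + 1))).mul hC)
  refine this.congr_deriv ?_
  rw [psiRemainderHyp, ← sub_eq_zero]
  have hsum : ∑ n ∈ range N, ((2 * n + 2) * psiCoeff p (n + 1) *
        ((2 * n + 1 : ℕ) * (2 * sinh u) ^ (2 * n + 1 - 1) * (2 * cosh u)) * (2 * cosh u) +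
          (2 * n + 2) * psiCoeff p (n + 1) * (2 * sinh u) ^ (2 * n + 1) * (2 * sinh u)) =
      ∑ n ∈ range N, (2 * n + 2) * psiCoeff p (n + 1) * ((2 * n + 1) *
        ((2 * sinh u) ^ 2 + 4) * (2 * sinh u) ^ (2 * n) + (2 * sinh u) ^ (2 * n + 2)) :=
    sum_congr rfl fun n _ => by
      push_cast
      linear_combination 4 * (2 * n + 2) * psiCoeff p (n + 1) * (2 * n + 1) *
        (2 * sinh u) ^ (2 * n) * cosh_sq u
  simp only [Pi.pow_apply]
  rw [hsum, sum_psiCoeff_ode_defect]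
  ring

theorem psiRemainderHyp_zero (p : ℝ) (N : ℕ) : psiRemainderHyp p N 0 = 0 := by
  rw [psiRemainderHyp, sum_range_succ']
  simp [psiCoeff_zero]

theorem psiRemainderHypDeriv_zero (p : ℝ) (N : ℕ) : psiRemainderHypDeriv p N 0 = 0 := by
  simp [psiRemainderHypDeriv]

theorem mul_psiRemainderHyp_nonneg {p ε : ℝ} {N : ℕ} (hε : 0 ≤ ε * psiCoeff p (N + 1))
    {u : ℝ} (hu : 0 ≤ u) : 0 ≤ ε * psiRemainderHyp p N u := by
  refine nonneg_of_hasDerivAt_sq_mul_add (q := p) (f := fun v => ε * psiRemainderHyp p N v)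
    (h := fun v =>
      4 * (2 * N + 1) * (2 * N + 2) * (ε * psiCoeff p (N + 1)) * ((2 * sinh v) ^ 2) ^ N)
    (fun v => (hasDerivAt_psiRemainderHyp p N v).const_mul ε)
    (fun v => ((hasDerivAt_psiRemainderHypDeriv p N v).const_mul ε).congr_deriv (by ring))
    (fun v _ => by positivity) (by simp [psiRemainderHyp_zero])
    (by simp [psiRemainderHypDeriv_zero]) hu

/-- For `0 < p < ∞`, `t ≥ 0` and `N ≥ 0`: the remainder `ψ(t) − Σ_{n=0}^N λ_n tⁿ` is
nonnegative if `p ≥ 2N` or `⌊N − p/2⌋` is odd, and nonpositive otherwise. -/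
theorem psi_remainder_sign (p : ℝ) (hp : 0 < p) (t : ℝ) (ht : 0 ≤ t) (N : ℕ) :
    ((2 * (N : ℝ) ≤ p ∨ Odd ⌊(N : ℝ) - p / 2⌋) →
      0 ≤ psiFun p t - ∑ n ∈ Finset.range (N + 1), psiCoeff p n * t ^ n) ∧
    (¬(2 * (N : ℝ) ≤ p ∨ Odd ⌊(N : ℝ) - p / 2⌋) →
      psiFun p t - ∑ n ∈ Finset.range (N + 1), psiCoeff p n * t ^ n ≤ 0) := by
  obtain ⟨u, hu, rfl⟩ : ∃ u, 0 ≤ u ∧ (2 * sinh u) ^ 2 = t :=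
    ⟨arsinh (√t / 2), arsinh_nonneg_iff.2 (by positivity), by
      rw [sinh_arsinh, mul_div_cancel₀ _ two_ne_zero, sq_sqrt ht]⟩
  rw [psiFun_two_sinh_sq p hu]
  constructor
  · intro h
    simpa [psiRemainderHyp] using
      mul_psiRemainderHyp_nonneg (ε := 1) (by simpa using psiCoeff_succ_nonneg hp.le h) hu
  · intro h
    simpa [psiRemainderHyp] using
      mul_psiRemainderHyp_nonneg (ε := -1) (by simpa using psiCoeff_succ_nonpos hp.le h) hu
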